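/- Let Λ = ℤ_p⟦T₁, T₂⟧ (the two-variable Iwasawa algebra, identified with Λ(G) for G ≅ ℤ_p²) and let Λ(H) = ℤ_p⟦T₂⟧ ⊆ Λ. If M is a finitely generated Λ-module that is also finitely generated as a Λ(H)-module, then M is a torsion Λ-module. -/

import Mathlib

/-!
Multiplication by the variable `T₁ ∉ Λ(H)` is a `Λ(H)`-linear endomorphism of the finitely generated
`Λ(H)`-module `M`, so by Cayley–Hamilton it is a root of a monic polynomial `q` over `Λ(H)`, and
`q(T₁)` annihilates `M`. Reducing modulo the variable of `Λ(H)` shows that `T₁` is not integral over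
`Λ(H)`, so `q(T₁)` is a nonzero element of the domain `Λ`.
-/

open PowerSeries

theorem PowerSeries.transcendental_X (R : Type*) [CommRing R] [Nontrivial R] :
    Transcendental R (X : R⟦X⟧) := by
  have hX : (X : R⟦X⟧) = Polynomial.coeToPowerSeries.algHom R (Polynomial.X (R := R)) := by
    simp
  rw [hX, Transcendental, isAlgebraic_algHom_iff]
  · exact Polynomial.transcendental_X R
  · exact fun φ ψ h ↦ Polynomial.coe_injective R (by simpa using h)

/-- The algebra structure embeds `R⟦X⟧` into `R⟦X⟧⟦X⟧` coefficientwise, i.e. as power series in the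
outer variable; `C X` is the other variable. -/
theorem PowerSeries.not_isIntegral_C_X (R : Type*) [CommRing R] [Nontrivial R] :
    ¬ IsIntegral R⟦X⟧ (C (X : R⟦X⟧)) := fun h ↦ by
  have hcomm : (algebraMap R R⟦X⟧).comp constantCoeff =
      constantCoeff.comp (algebraMap R⟦X⟧ R⟦X⟧⟦X⟧) := by
    ext a : 1
    rw [RingHom.comp_apply, RingHom.comp_apply, algebraMap_apply'',
      ← coeff_zero_eq_constantCoeff_apply (map _ a), coeff_map, coeff_zero_eq_constantCoeff_apply]
  have hX := h.map_of_comp_eq _ _ hcomm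
  rw [constantCoeff_C] at hX
  exact transcendental_X R hX.isAlgebraic

theorem Module.isTorsion_of_finite_of_not_isIntegral {A B M : Type*} [CommRing A] [CommRing B]
    [NoZeroDivisors B] [Algebra A B] [AddCommGroup M] [Module A M] [Module B M]
    [IsScalarTower A B M] [Module.Finite A M] {b : B} (hb : ¬ IsIntegral A b) :
    Module.IsTorsion B M := by
  obtain ⟨q, hq, hqb⟩ := Module.End.isIntegral.isIntegral (Algebra.lsmul A A M b)
  have hann (m : M) : Polynomial.aeval b q • m = 0 := by
    rw [← Polynomial.aeval_def, Polynomial.aeval_algHom_apply] at hqb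
    exact LinearMap.congr_fun hqb m
  have hq_ne : Polynomial.aeval b q ≠ 0 := fun h ↦ hb ⟨q, hq, h⟩
  exact fun m ↦ ⟨⟨_, mem_nonZeroDivisors_of_ne_zero hq_ne⟩, hann m⟩

theorem isTorsion_of_finite_over_subalgebra_general
    (p : ℕ) [Fact p.Prime]
    (M : Type*) [AddCommGroup M]
    [Module (PowerSeries (PowerSeries ℤ_[p])) M]
    [Module (PowerSeries ℤ_[p]) M]
    [IsScalarTower (PowerSeries ℤ_[p]) (PowerSeries (PowerSeries ℤ_[p])) M]
    [Module.Finite (PowerSeries ℤ_[p]) M] :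
    Module.IsTorsion (PowerSeries (PowerSeries ℤ_[p])) M :=
  Module.isTorsion_of_finite_of_not_isIntegral (PowerSeries.not_isIntegral_C_X ℤ_[p])

/-- Let `Λ = ℤ_p⟦T₁, T₂⟧` (realized as `(ℤ_p⟦T₂⟧)⟦T₁⟧`) be the two-variable Iwasawa algebra
and `Λ(H) = ℤ_p⟦T₂⟧ ⊆ Λ`.  If `M` is a finitely generated `Λ`-module which is also finitely
generated as a `Λ(H)`-module, then `M` is a torsion `Λ`-module. -/
theorem isTorsion_of_finite_over_subalgebra
    (p : ℕ) [Fact p.Prime]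
    (M : Type*) [AddCommGroup M]
    [Module (PowerSeries (PowerSeries ℤ_[p])) M]
    [Module (PowerSeries ℤ_[p]) M]
    [IsScalarTower (PowerSeries ℤ_[p]) (PowerSeries (PowerSeries ℤ_[p])) M]
    [Module.Finite (PowerSeries (PowerSeries ℤ_[p])) M]
    [Module.Finite (PowerSeries ℤ_[p]) M] :
    Module.IsTorsion (PowerSeries (PowerSeries ℤ_[p])) M :=
  isTorsion_of_finite_over_subalgebra_general p M
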